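/- Let g₅(y₁,…,y₇) = y₅·(y₁y₂y₃ + 2y₄y₆ − y₁y₆² − y₂ − y₃y₄²) − y₇². The set of singular points of the hypersurface {g₅ = 0} in ℂ⁷, i.e. points y ∈ ℂ⁷ with g₅(y) = 0 and ∇g₅(y) = 0, is exactly the union of the two sets A = {y : y₅ = 0, y₇ = 0, y₁y₂y₃ + 2y₄y₆ − y₁y₆² − y₂ − y₃y₄² = 0} and B = {y : y₇ = 0, y₁y₂ = y₄², y₁y₃ = 1, y₁y₆ = y₄}. -/

import Mathlib

/-!
Write F for the cubic factor of g₅, so that g₅ = y₅F − y₇². Its gradient is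
(y₅∂₁F, y₅∂₂F, y₅∂₃F, y₅∂₄F, F, y₅∂₆F, −2y₇), and F is independent of y₅. Hence a
singular point has y₇ = 0 and F = 0, and either y₅ = 0 (the component A) or the
remaining partials of F vanish. Among these, ∂₂F = y₁y₃ − 1, ∂₃F = y₁y₂ − y₄² and
∂₆F = 2(y₄ − y₁y₆) cut out B. Conversely B is the graph y₂ = y₃y₄², y₆ = y₃y₄ over
{y₁y₃ = 1, y₇ = 0}, on which F and all its partials vanish identically.
-/

open MvPolynomial

/-- g₅(y₁,…,y₇) = y₅(y₁y₂y₃ + 2y₄y₆ − y₁y₆² − y₂ − y₃y₄²) − y₇²,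
with variables y₁,…,y₇ indexed by `Fin 7`. -/
noncomputable def g5Poly : MvPolynomial (Fin 7) ℂ :=
  X 4 * (X 0 * X 1 * X 2 + 2 * X 3 * X 5 - X 0 * X 5 ^ 2 - X 1 - X 2 * X 3 ^ 2)
    - X 6 ^ 2

@[simp]
theorem Derivation.map_ofNat {R A M : Type*} [CommSemiring R] [CommSemiring A]
    [AddCommMonoid M] [Algebra R A] [Module A M] [Module R M] (D : Derivation R A M)
    (n : ℕ) [n.AtLeastTwo] : D (ofNat(n) : A) = 0 := by
  rw [← Nat.cast_ofNat]
  exact D.map_natCast n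

section

variable {R : Type*} [CommRing R]

def g5Factor (y : Fin 7 → R) : R :=
  y 0 * y 1 * y 2 + 2 * y 3 * y 5 - y 0 * y 5 ^ 2 - y 1 - y 2 * y 3 ^ 2

def g5Gradient (y : Fin 7 → R) : Fin 7 → R :=
  ![y 4 * (y 1 * y 2 - y 5 ^ 2), y 4 * (y 0 * y 2 - 1), y 4 * (y 0 * y 1 - y 3 ^ 2),
    2 * y 4 * (y 5 - y 2 * y 3), g5Factor y, 2 * y 4 * (y 3 - y 0 * y 5), -(2 * y 6)]

theorem g5Gradient_eq_zero_of_exceptional {y : Fin 7 → R} (h4 : y 4 = 0) (h6 : y 6 = 0)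
    (hF : g5Factor y = 0) (i : Fin 7) : g5Gradient y i = 0 := by
  fin_cases i <;> simp [g5Gradient, h4, h6, hF]

theorem g5Gradient_eq_zero_of_kummer {y : Fin 7 → R} (h6 : y 6 = 0)
    (h01 : y 0 * y 1 = y 3 ^ 2) (h02 : y 0 * y 2 = 1) (h05 : y 0 * y 5 = y 3) (i : Fin 7) :
    g5Gradient y i = 0 := by
  have hy1 : y 1 = y 2 * y 3 ^ 2 := by linear_combination y 2 * h01 - y 1 * h02
  have hy5 : y 5 = y 2 * y 3 := by linear_combination y 2 * h05 - y 5 * h02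
  fin_cases i <;> simp [g5Gradient, g5Factor, hy1, hy5, h6] <;> grind

variable [IsDomain R] [NeZero (2 : R)]

theorem coord_six_eq_zero_of_g5Gradient_eq_zero {y : Fin 7 → R}
    (hgrad : ∀ i, g5Gradient y i = 0) : y 6 = 0 := by
  simpa [g5Gradient, two_ne_zero] using hgrad 6

theorem g5_eq_zero_of_g5Gradient_eq_zero {y : Fin 7 → R} (hgrad : ∀ i, g5Gradient y i = 0) :
    y 4 * g5Factor y - y 6 ^ 2 = 0 := by
  have hF : g5Factor y = 0 := hgrad 4
  simp [hF, coord_six_eq_zero_of_g5Gradient_eq_zero hgrad]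

theorem forall_g5Gradient_eq_zero_iff (y : Fin 7 → R) :
    (∀ i, g5Gradient y i = 0) ↔
      ((y 4 = 0 ∧ y 6 = 0 ∧ g5Factor y = 0) ∨
        (y 6 = 0 ∧ y 0 * y 1 = y 3 ^ 2 ∧ y 0 * y 2 = 1 ∧ y 0 * y 5 = y 3)) := by
  refine ⟨fun hgrad ↦ ?_, ?_⟩
  · have h6 := coord_six_eq_zero_of_g5Gradient_eq_zero hgrad
    have hF : g5Factor y = 0 := hgrad 4
    by_cases h4 : y 4 = 0
    · exact .inl ⟨h4, h6, hF⟩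
    have h02 : y 4 * (y 0 * y 2 - 1) = 0 := hgrad 1
    have h01 : y 4 * (y 0 * y 1 - y 3 ^ 2) = 0 := hgrad 2
    have h05 : 2 * y 4 * (y 3 - y 0 * y 5) = 0 := hgrad 5
    simp only [mul_eq_zero, h4, two_ne_zero, sub_eq_zero, false_or] at h01 h02 h05
    exact .inr ⟨h6, h01, h02, h05.symm⟩
  · rintro (⟨h4, h6, hF⟩ | ⟨h6, h01, h02, h05⟩)
    · exact g5Gradient_eq_zero_of_exceptional h4 h6 hF
    · exact g5Gradient_eq_zero_of_kummer h6 h01 h02 h05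

end

theorem eval_g5Poly (y : Fin 7 → ℂ) : eval y g5Poly = y 4 * g5Factor y - y 6 ^ 2 := by
  simp [g5Poly, g5Factor]

theorem eval_pderiv_g5Poly (y : Fin 7 → ℂ) (i : Fin 7) :
    eval y (pderiv i g5Poly) = g5Gradient y i := by
  fin_cases i <;> simp [g5Poly, g5Gradient, g5Factor, pderiv_X, mul_comm] <;> ring

/-- The singular locus of the hypersurface {g₅ = 0} ⊂ ℂ⁷ is exactly the union
A ∪ B with A = {y₅ = 0, y₇ = 0, y₁y₂y₃+2y₄y₆−y₁y₆²−y₂−y₃y₄² = 0}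
and B = {y₇ = 0, y₁y₂ = y₄², y₁y₃ = 1, y₁y₆ = y₄}. -/
theorem singular_locus_g5 (y : Fin 7 → ℂ) :
    (eval y g5Poly = 0 ∧ ∀ i : Fin 7, eval y (pderiv i g5Poly) = 0) ↔
    ((y 4 = 0 ∧ y 6 = 0 ∧
        y 0 * y 1 * y 2 + 2 * y 3 * y 5 - y 0 * y 5 ^ 2 - y 1 - y 2 * y 3 ^ 2 = 0) ∨
      (y 6 = 0 ∧ y 0 * y 1 = y 3 ^ 2 ∧ y 0 * y 2 = 1 ∧ y 0 * y 5 = y 3)) := by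
  simp only [eval_g5Poly, eval_pderiv_g5Poly]
  rw [and_iff_right_of_imp g5_eq_zero_of_g5Gradient_eq_zero]
  exact forall_g5Gradient_eq_zero_iff y
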